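/- For every integer k ≥ 0, the tree H(k) satisfies lmw(H(k)) = k. -/

import Mathlib

open scoped Classical

noncomputable section

namespace LMW

variable {V : Type*} [Fintype V]

/-- The bipartite graph `G[Vᵢ, V̄ᵢ]` consisting of the edges of `G` crossing the cut at
position `i` of the linear layout `σ` (here `Vᵢ` is the set of the first `i` vertices
in the layout). -/
def cutGraph (G : SimpleGraph V) (σ : V ≃ Fin (Fintype.card V)) (i : ℕ) : SimpleGraph V where
  Adj u v := G.Adj u v ∧
    (((σ u : ℕ) < i ∧ i ≤ (σ v : ℕ)) ∨ ((σ v : ℕ) < i ∧ i ≤ (σ u : ℕ)))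
  symm := by
    constructor
    intro u v h
    exact ⟨h.1.symm, h.2.symm⟩
  loopless := by
    constructor
    intro u h
    exact G.loopless.irrefl u h.1

/-- `M` is an induced matching in `H`: a set of edges of `H` such that any two distinct
edges of `M` share no endpoint and no endpoint of one is adjacent in `H` to an endpoint
of the other. -/
def IsInducedMatching (H : SimpleGraph V) (M : Finset (Sym2 V)) : Prop :=
  (↑M : Set (Sym2 V)) ⊆ H.edgeSet ∧
    ∀ e ∈ M, ∀ f ∈ M, e ≠ f → ∀ u ∈ e, ∀ v ∈ f, u ≠ v ∧ ¬ H.Adj u v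

/-- `mim H` is the size of a maximum induced matching of `H`. -/
def mim (H : SimpleGraph V) : ℕ :=
  sSup {n : ℕ | ∃ M : Finset (Sym2 V), IsInducedMatching H M ∧ M.card = n}

/-- The MIM-width of `G` under the linear layout `σ`: the maximum over all cuts
`1 ≤ i < |V|` of the size of a maximum induced matching of the cut graph. -/
def mw (G : SimpleGraph V) (σ : V ≃ Fin (Fintype.card V)) : ℕ :=
  (Finset.Ico 1 (Fintype.card V)).sup fun i => mim (cutGraph G σ i)

/-- The linear MIM-width of `G`: the minimum of `mw G σ` over all linear layouts `σ`. -/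
def lmw (G : SimpleGraph V) : ℕ :=
  sInf {m : ℕ | ∃ σ : V ≃ Fin (Fintype.card V), mw G σ = m}

/-- Vertex type of the tree `H k`:  `H 0` is a single vertex; `H (k+1)` consists of a root
`u = Sum.inl ()`, three children `vᵢ = Sum.inr (i, Sum.inl ())` and, below each `vᵢ`, three
copies of `H k`, the `j`-th copy having vertices `Sum.inr (i, Sum.inr (j, a))`. -/
def HV : ℕ → Type
  | 0 => Unit
  | k + 1 => Unit ⊕ (Fin 3 × (Unit ⊕ (Fin 3 × HV k)))

instance instDecEqHV : ∀ k, DecidableEq (HV k)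
  | 0 => inferInstanceAs (DecidableEq Unit)
  | k + 1 =>
    letI := instDecEqHV k
    inferInstanceAs (DecidableEq (Unit ⊕ (Fin 3 × (Unit ⊕ (Fin 3 × HV k)))))

instance instFintypeHV : ∀ k, Fintype (HV k)
  | 0 => inferInstanceAs (Fintype Unit)
  | k + 1 =>
    letI := instFintypeHV k
    inferInstanceAs (Fintype (Unit ⊕ (Fin 3 × (Unit ⊕ (Fin 3 × HV k)))))

/-- The root of `H k`. -/
def Hroot : ∀ k, HV k
  | 0 => ()
  | _ + 1 => Sum.inl ()

/-- The tree `H k`: the root `u` is adjacent to the three children `vᵢ`, each child `vᵢ` is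
adjacent to the roots of its three copies of `H k`, and within each copy the edges are those
of `H k`. -/
def Hgraph : ∀ k, SimpleGraph (HV k)
  | 0 => ⊥
  | k + 1 => SimpleGraph.fromRel (fun x y : HV (k + 1) =>
      (∃ i : Fin 3, x = Sum.inl () ∧ y = Sum.inr (i, Sum.inl ())) ∨
      (∃ (i j : Fin 3), x = Sum.inr (i, Sum.inl ()) ∧ y = Sum.inr (i, Sum.inr (j, Hroot k))) ∨
      (∃ (i j : Fin 3) (a b : HV k), x = Sum.inr (i, Sum.inr (j, a)) ∧
        y = Sum.inr (i, Sum.inr (j, b)) ∧ (Hgraph k).Adj a b))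

end LMW

/-!
Lower bound: by induction, every layout of `H k` has a cut carrying an induced matching of size
`k` that avoids the root. In a layout of `H (k + 2)`, take such cuts for the three copies of
`H (k + 1)` below the child `v₀`. If every edge crossing the cut of a copy touched `u` or that
copy, the other two copies would lie entirely on the side of `v₀`, which is impossible for the
copy whose cut is the median one. So some cut is crossed by an edge far from the matching of its
copy, and adding this edge gives an induced matching of size `k + 2`.

Upper bound: lay out `H (k + 1)` with each copy of `H k` in a contiguous block, laid out
recursively, each child next to the blocks of its own copies and `u` between the blocks of `v₀`
and `v₁`. A cut crosses edges of at most one copy, contributing at most `k`, and an induced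
matching contains at most one of the remaining edges, those at `u` and at the children.
-/

namespace LMW

section Cuts

variable {V W : Type*}

/-- `cutGraph` for an arbitrary position function, such as the restriction of a layout to a
subgraph. -/
def crossGraph (G : SimpleGraph V) (pos : V → ℕ) (i : ℕ) : SimpleGraph V where
  Adj u v := G.Adj u v ∧ ((pos u < i ∧ i ≤ pos v) ∨ (pos v < i ∧ i ≤ pos u))
  symm := ⟨fun _ _ h => ⟨h.1.symm, h.2.symm⟩⟩
  loopless := ⟨fun u h => G.loopless.irrefl u h.1⟩

lemma crossGraph_shift (G : SimpleGraph V) (pos : V → ℕ) (s i : ℕ) :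
    crossGraph G (fun v => s + pos v) i = crossGraph G pos (i - s) := by
  ext u v
  simp only [crossGraph]
  exact and_congr_right fun _ => by omega

def _root_.SimpleGraph.Embedding.crossGraph {G : SimpleGraph V} {G' : SimpleGraph W}
    (f : G ↪g G') (pos : W → ℕ) (i : ℕ) : crossGraph G (pos ∘ f) i ↪g crossGraph G' pos i where
  toEmbedding := f.toEmbedding
  map_rel_iff' := by simp [LMW.crossGraph]

lemma _root_.SimpleGraph.Preconnected.iff_of_adj {G : SimpleGraph V} (hG : G.Preconnected)
    {p : V → Prop} (h : ∀ a b, G.Adj a b → (p a ↔ p b)) (a b : V) : p a ↔ p b := by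
  obtain ⟨w⟩ := hG a b
  induction w with
  | nil => rfl
  | cons hadj _ ih => exact (h _ _ hadj).trans ih

end Cuts

section InducedMatching

variable {V W : Type*} {H : SimpleGraph V} {M N : Finset (Sym2 V)}

lemma IsInducedMatching.empty (H : SimpleGraph V) : IsInducedMatching H ∅ :=
  ⟨by simp, by simp⟩

lemma IsInducedMatching.adj (hM : IsInducedMatching H M) {x y : V} (h : s(x, y) ∈ M) :
    H.Adj x y :=
  hM.1 h

lemma IsInducedMatching.mono (hN : IsInducedMatching H N) (hMN : M ⊆ N) :
    IsInducedMatching H M :=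
  ⟨(Finset.coe_subset.mpr hMN).trans hN.1,
    fun e he f hf => hN.2 e (hMN he) f (hMN hf)⟩

lemma isInducedMatching_map_iff {H' : SimpleGraph W} (f : H ↪g H') :
    IsInducedMatching H' (M.map f.toEmbedding.sym2Map) ↔ IsInducedMatching H M := by
  have hinj : Function.Injective (Sym2.map f) := Sym2.map.injective f.injective
  simp [IsInducedMatching, Set.image_subset_iff, hinj.ne_iff]

lemma IsInducedMatching.insert [DecidableEq V] (hM : IsInducedMatching H M) {x y : V}
    (hxy : H.Adj x y) (hfar : ∀ e ∈ M, ∀ w ∈ e, ∀ z ∈ s(x, y), w ≠ z ∧ ¬ H.Adj w z) :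
    IsInducedMatching H (insert s(x, y) M) := by
  refine ⟨?_, ?_⟩
  · rw [Finset.coe_insert, Set.insert_subset_iff]
    exact ⟨hxy, hM.1⟩
  · simp only [Finset.mem_insert]
    rintro e (rfl | he) f (rfl | hf) hef u hu v hv
    · exact absurd rfl hef
    · have := hfar f hf v hv u hu
      exact ⟨this.1.symm, fun h => this.2 h.symm⟩
    · exact hfar e he u hu v hv
    · exact hM.2 e he f hf hef u hu v hv

lemma mim_le {m : ℕ} (h : ∀ M, IsInducedMatching H M → M.card ≤ m) : mim H ≤ m :=
  csSup_le ⟨0, ∅, .empty H, rfl⟩ fun _ ⟨M, hM, hcard⟩ => hcard ▸ h M hM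

end InducedMatching

section Width

variable {V : Type*} [Fintype V] {G H : SimpleGraph V} {M : Finset (Sym2 V)}

lemma IsInducedMatching.card_le_mim (hM : IsInducedMatching H M) : M.card ≤ mim H :=
  le_csSup ⟨Fintype.card (Sym2 V), fun _ ⟨N, _, hN⟩ => hN ▸ N.card_le_univ⟩ ⟨M, hM, rfl⟩

lemma mw_le {σ : V ≃ Fin (Fintype.card V)} {m : ℕ}
    (h : ∀ i M, IsInducedMatching (crossGraph G (σ ·) i) M → M.card ≤ m) : mw G σ ≤ m :=
  Finset.sup_le fun i _ => mim_le (h i)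

/-- Cuts outside `1 ≤ i < |V|` are crossed by no edge. -/
lemma IsInducedMatching.card_le_mw {σ : V ≃ Fin (Fintype.card V)} {i : ℕ}
    (hM : IsInducedMatching (crossGraph G (σ ·) i) M) : M.card ≤ mw G σ := by
  obtain rfl | ⟨e, he⟩ := M.eq_empty_or_nonempty
  · exact Nat.zero_le _
  induction e using Sym2.ind with
  | h x y =>
    obtain ⟨-, hcross⟩ := hM.adj he
    dsimp only at hcross
    have hi : i ∈ Finset.Ico 1 (Fintype.card V) := by
      have := (σ x).isLt; have := (σ y).isLt
      rw [Finset.mem_Ico]; omega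
    exact hM.card_le_mim.trans (Finset.le_sup (f := fun i => mim (cutGraph G σ i)) hi)

lemma lmw_le (σ : V ≃ Fin (Fintype.card V)) : lmw G ≤ mw G σ :=
  Nat.sInf_le ⟨σ, rfl⟩

lemma le_lmw {m : ℕ} (h : ∀ σ : V ≃ Fin (Fintype.card V), m ≤ mw G σ) : m ≤ lmw G :=
  le_csInf ⟨_, Fintype.equivFin V, rfl⟩ fun _ ⟨σ, hσ⟩ => hσ ▸ h σ

lemma exists_equiv_fin_of_injective {pos : V → ℕ} (hinj : Function.Injective pos)
    (hlt : ∀ v, pos v < Fintype.card V) :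
    ∃ σ : V ≃ Fin (Fintype.card V), ∀ v, (σ v : ℕ) = pos v := by
  have hbij : Function.Bijective fun v => (⟨pos v, hlt v⟩ : Fin (Fintype.card V)) :=
    (Fintype.bijective_iff_injective_and_card _).mpr
      ⟨fun a b h => hinj (congrArg Fin.val h), by simp⟩
  exact ⟨Equiv.ofBijective _ hbij, fun _ => rfl⟩

end Width

section Tree

variable {k : ℕ}

def Hchild (k : ℕ) (m : Fin 3) : HV (k + 1) := Sum.inr (m, Sum.inl ())

def Hcopy (k : ℕ) (m j : Fin 3) (a : HV k) : HV (k + 1) := Sum.inr (m, Sum.inr (j, a))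

lemma Hroot_succ : Hroot (k + 1) = Sum.inl () := rfl

lemma HV_succ_cases (x : HV (k + 1)) :
    x = Hroot (k + 1) ∨ (∃ m, x = Hchild k m) ∨ ∃ m j a, x = Hcopy k m j a := by
  rcases x with _ | ⟨m, _ | ⟨j, a⟩⟩
  exacts [.inl rfl, .inr (.inl ⟨m, rfl⟩), .inr (.inr ⟨m, j, a, rfl⟩)]

@[simp] lemma Hcopy_inj {m m' j j' : Fin 3} {a a' : HV k} :
    Hcopy k m j a = Hcopy k m' j' a' ↔ m = m' ∧ j = j' ∧ a = a' := by
  simp [Hcopy, HV]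

@[simp] lemma Hroot_ne_Hchild {m : Fin 3} : Hroot (k + 1) ≠ Hchild k m := by
  simp [Hroot_succ, Hchild, HV]

@[simp] lemma Hroot_ne_Hcopy {m j : Fin 3} {a : HV k} : Hroot (k + 1) ≠ Hcopy k m j a := by
  simp [Hroot_succ, Hcopy, HV]

@[simp] lemma Hchild_ne_Hcopy {m m' j : Fin 3} {a : HV k} : Hchild k m ≠ Hcopy k m' j a := by
  simp [Hchild, Hcopy, HV]

@[simp] lemma Hchild_ne_Hroot {m : Fin 3} : Hchild k m ≠ Hroot (k + 1) :=
  Hroot_ne_Hchild.symm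

@[simp] lemma Hcopy_ne_Hroot {m j : Fin 3} {a : HV k} : Hcopy k m j a ≠ Hroot (k + 1) :=
  Hroot_ne_Hcopy.symm

@[simp] lemma Hgraph_adj_root_child {m : Fin 3} :
    (Hgraph (k + 1)).Adj (Hroot (k + 1)) (Hchild k m) := by
  simp [Hgraph, Hroot_succ, Hchild, HV]

@[simp] lemma Hgraph_not_adj_root_copy {m j : Fin 3} {a : HV k} :
    ¬ (Hgraph (k + 1)).Adj (Hroot (k + 1)) (Hcopy k m j a) := by
  simp [Hgraph, Hroot_succ, Hcopy, HV]

@[simp] lemma Hgraph_not_adj_child_child {m m' : Fin 3} :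
    ¬ (Hgraph (k + 1)).Adj (Hchild k m) (Hchild k m') := by
  simp [Hgraph, Hchild, HV]

@[simp] lemma Hgraph_adj_child_copy {m m' j : Fin 3} {a : HV k} :
    (Hgraph (k + 1)).Adj (Hchild k m) (Hcopy k m' j a) ↔ m = m' ∧ a = Hroot k := by
  simp [Hgraph, Hchild, Hcopy, HV, eq_comm]

@[simp] lemma Hgraph_not_adj_copy_root {m j : Fin 3} {a : HV k} :
    ¬ (Hgraph (k + 1)).Adj (Hcopy k m j a) (Hroot (k + 1)) :=
  fun h => Hgraph_not_adj_root_copy h.symm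

@[simp] lemma Hgraph_adj_copy_child {m m' j : Fin 3} {a : HV k} :
    (Hgraph (k + 1)).Adj (Hcopy k m' j a) (Hchild k m) ↔ m = m' ∧ a = Hroot k :=
  SimpleGraph.adj_comm _ _ _ |>.trans Hgraph_adj_child_copy

@[simp] lemma Hgraph_adj_copy_copy {m m' j j' : Fin 3} {a b : HV k} :
    (Hgraph (k + 1)).Adj (Hcopy k m j a) (Hcopy k m' j' b) ↔
      m = m' ∧ j = j' ∧ (Hgraph k).Adj a b := by
  simp only [HV, Hgraph, Hcopy, SimpleGraph.fromRel_adj, ne_eq, Sum.inr.injEq, Prod.mk.injEq,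
    not_and, exists_and_left, reduceCtorEq, and_false, exists_const, and_self, ↓existsAndEq,
    true_and, false_and, and_true, exists_eq_left', false_or]
  constructor
  · rintro ⟨-, ⟨⟨rfl, rfl⟩, h⟩ | ⟨⟨rfl, rfl⟩, h⟩⟩
    exacts [⟨rfl, rfl, h⟩, ⟨rfl, rfl, h.symm⟩]
  · rintro ⟨rfl, rfl, h⟩
    exact ⟨fun _ _ => h.ne, .inl ⟨⟨rfl, rfl⟩, h⟩⟩

def HcopyEmb (k : ℕ) (m j : Fin 3) : Hgraph k ↪g Hgraph (k + 1) where
  toFun := Hcopy k m j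
  inj' := fun _ _ h => (Hcopy_inj.mp h).2.2
  map_rel_iff' := Hgraph_adj_copy_copy.trans (by simp)

lemma Hgraph_reachable_root : ∀ (k : ℕ) (x : HV k), (Hgraph k).Reachable x (Hroot k)
  | 0, () => .rfl
  | k + 1, x => by
    have hchild (m : Fin 3) : (Hgraph (k + 1)).Reachable (Hchild k m) (Hroot (k + 1)) :=
      Hgraph_adj_root_child.symm.reachable
    rcases HV_succ_cases x with rfl | ⟨m, rfl⟩ | ⟨m, j, a, rfl⟩
    · exact .rfl
    · exact hchild m
    · have hroot : (Hgraph (k + 1)).Adj (Hcopy k m j (Hroot k)) (Hchild k m) := by simp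
      exact ((Hgraph_reachable_root k a).map (HcopyEmb k m j).toHom).trans
        (hroot.reachable.trans (hchild m))

lemma Hgraph_preconnected (k : ℕ) : (Hgraph k).Preconnected := fun x y =>
  (Hgraph_reachable_root k x).trans (Hgraph_reachable_root k y).symm

end Tree

lemma exists_median_of_fin_three {α : Type*} [LinearOrder α] (τ : Fin 3 → α) :
    ∃ i j l, i ≠ j ∧ l ≠ j ∧ τ i ≤ τ j ∧ τ j ≤ τ l := by
  rcases le_total (τ 0) (τ 1) with _ | _ <;> rcases le_total (τ 1) (τ 2) with _ | _ <;>
    rcases le_total (τ 0) (τ 2) with _ | _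
  all_goals first
    | exact ⟨0, 1, 2, by decide, by decide, by assumption, by assumption⟩
    | exact ⟨2, 1, 0, by decide, by decide, by assumption, by assumption⟩
    | exact ⟨1, 0, 2, by decide, by decide, by assumption, by assumption⟩
    | exact ⟨2, 0, 1, by decide, by decide, by assumption, by assumption⟩
    | exact ⟨0, 2, 1, by decide, by decide, by assumption, by assumption⟩
    | exact ⟨1, 2, 0, by decide, by decide, by assumption, by assumption⟩

section LowerBound

variable {k : ℕ}

lemma Hgraph_adj_copy_of_ne_root {m j : Fin 3} {a : HV k} (ha : a ≠ Hroot k) {w : HV (k + 1)}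
    (h : (Hgraph (k + 1)).Adj (Hcopy k m j a) w) : ∃ b, w = Hcopy k m j b := by
  rcases HV_succ_cases w with rfl | ⟨m', rfl⟩ | ⟨m', j', b, rfl⟩
  · simp at h
  · simp [ha] at h
  · obtain ⟨rfl, rfl, -⟩ := Hgraph_adj_copy_copy.mp h
    exact ⟨b, rfl⟩

lemma exists_inducedMatching_insert_of_copy {pos : HV (k + 1) → ℕ} {τ : ℕ} {m j : Fin 3}
    {M : Finset (Sym2 (HV k))}
    (hM : IsInducedMatching (crossGraph (Hgraph k) (pos ∘ Hcopy k m j) τ) M)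
    (hroot : ∀ e ∈ M, Hroot k ∉ e) {x y : HV (k + 1)}
    (hxy : (crossGraph (Hgraph (k + 1)) pos τ).Adj x y)
    (hx : x ≠ Hroot (k + 1)) (hy : y ≠ Hroot (k + 1))
    (hxc : ∀ b, x ≠ Hcopy k m j b) (hyc : ∀ b, y ≠ Hcopy k m j b) :
    ∃ M' : Finset (Sym2 (HV (k + 1))), IsInducedMatching (crossGraph (Hgraph (k + 1)) pos τ) M' ∧
      M'.card = M.card + 1 ∧ ∀ e ∈ M', Hroot (k + 1) ∉ e := by
  set N := M.map (HcopyEmb k m j).toEmbedding.sym2Map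
  have hN : IsInducedMatching (crossGraph (Hgraph (k + 1)) pos τ) N :=
    (isInducedMatching_map_iff ((HcopyEmb k m j).crossGraph pos τ)).mpr hM
  have hvert : ∀ e ∈ N, ∀ w ∈ e, ∃ a ≠ Hroot k, w = Hcopy k m j a := by
    simp only [N, Finset.mem_map, Function.Embedding.sym2Map_apply]
    rintro _ ⟨e, he, rfl⟩ w hw
    obtain ⟨a, ha, rfl⟩ := Sym2.mem_map.mp hw
    exact ⟨a, fun h => hroot e he (h ▸ ha), rfl⟩
  have hxyN : s(x, y) ∉ N := fun h => by
    obtain ⟨a, -, rfl⟩ := hvert _ h x (Sym2.mem_mk_left x y)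
    exact hxc a rfl
  refine ⟨insert s(x, y) N, hN.insert hxy fun e he w hw z hz => ?_, ?_, ?_⟩
  · obtain ⟨a, ha, rfl⟩ := hvert e he w hw
    have hzc : ∀ b, z ≠ Hcopy k m j b := by
      rcases Sym2.mem_iff.mp hz with rfl | rfl
      exacts [hxc, hyc]
    refine ⟨fun h => hzc a h.symm, fun h => ?_⟩
    obtain ⟨b, rfl⟩ := Hgraph_adj_copy_of_ne_root ha h.1
    exact hzc b rfl
  · rw [Finset.card_insert_of_notMem hxyN, Finset.card_map]
  · intro e he hre
    rcases Finset.mem_insert.mp he with rfl | he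
    · rcases Sym2.mem_iff.mp hre with h | h
      exacts [hx h.symm, hy h.symm]
    · obtain ⟨a, -, h⟩ := hvert e he _ hre
      exact Hroot_ne_Hcopy h

lemma Hcopy_lt_iff_Hchild_lt {pos : HV (k + 1) → ℕ} {τ : ℕ} {m j : Fin 3}
    (h : ∀ x y, (Hgraph (k + 1)).Adj x y → x ≠ Hroot (k + 1) → y ≠ Hroot (k + 1) →
      (∀ b, x ≠ Hcopy k m j b) → (∀ b, y ≠ Hcopy k m j b) → (pos x < τ ↔ pos y < τ))
    {j' : Fin 3} (hj : j' ≠ j) (a : HV k) :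
    pos (Hcopy k m j' a) < τ ↔ pos (Hchild k m) < τ := by
  have hout : ∀ b, Hcopy k m j' b ≠ Hroot (k + 1) ∧ ∀ b', Hcopy k m j' b ≠ Hcopy k m j b' :=
    fun b => ⟨by simp, by simp [hj]⟩
  have hcopy := (Hgraph_preconnected k).iff_of_adj
    (p := fun b => pos (Hcopy k m j' b) < τ)
    (fun b b' hbb' => h _ _ ((HcopyEmb k m j').map_adj_iff.mpr hbb') (hout b).1 (hout b').1
      (hout b).2 (hout b').2) a (Hroot k)
  refine hcopy.trans (h _ _ ?_ (hout _).1 (by simp) (hout _).2 (by simp))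
  simp

lemma exists_cross_edge_avoiding_copy (pos : HV (k + 1) → ℕ) (m : Fin 3) (τ : Fin 3 → ℕ)
    (hsplit : ∀ j, ∃ a b, pos (Hcopy k m j a) < τ j ∧ τ j ≤ pos (Hcopy k m j b)) :
    ∃ j x y, (crossGraph (Hgraph (k + 1)) pos (τ j)).Adj x y ∧
      x ≠ Hroot (k + 1) ∧ y ≠ Hroot (k + 1) ∧
      (∀ b, x ≠ Hcopy k m j b) ∧ (∀ b, y ≠ Hcopy k m j b) := by
  by_contra hno
  have hside : ∀ j j', j' ≠ j → ∀ a,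
      pos (Hcopy k m j' a) < τ j ↔ pos (Hchild k m) < τ j := by
    refine fun j j' hj => Hcopy_lt_iff_Hchild_lt (fun x y hxy hx hy hxc hyc => ?_) hj
    by_contra hne
    have hcross : (crossGraph (Hgraph (k + 1)) pos (τ j)).Adj x y := ⟨hxy, by omega⟩
    exact hno ⟨j, x, y, hcross, hx, hy, hxc, hyc⟩
  choose X Y hX hY using hsplit
  obtain ⟨j₁, j, j₃, h₁, h₃, hle₁, hle₃⟩ := exists_median_of_fin_three τ
  -- copy `j₁` reaches below the median cut `τ j` and copy `j₃` above it, yet both lie on the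
  -- same side of it as the child
  have := hside j j₁ h₁ (X j₁); have := hside j j₃ h₃ (Y j₃)
  have := hX j₁; have := hY j₃
  omega

theorem exists_cut_inducedMatching_card_eq :
    ∀ (k : ℕ) (pos : HV k → ℕ), Function.Injective pos →
      ∃ (τ : ℕ) (M : Finset (Sym2 (HV k))), IsInducedMatching (crossGraph (Hgraph k) pos τ) M ∧
        M.card = k ∧ ∀ e ∈ M, Hroot k ∉ e
  | 0, _, _ => ⟨0, ∅, .empty _, rfl, by simp⟩
  | 1, pos, hpos => by
    have hne : pos (Hchild 0 0) ≠ pos (Hcopy 0 0 1 (Hroot 0)) := hpos.ne (by simp)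
    have hcross : (crossGraph (Hgraph 1) pos (max (pos (Hchild 0 0))
        (pos (Hcopy 0 0 1 (Hroot 0))))).Adj (Hchild 0 0) (Hcopy 0 0 1 (Hroot 0)) :=
      ⟨by simp, by omega⟩
    obtain ⟨M, hM, hcard, hroot⟩ := exists_inducedMatching_insert_of_copy (m := 0) (j := 0)
      (.empty _) (by simp) hcross (by simp) (by simp) (by simp) (by simp)
    exact ⟨_, M, hM, hcard, hroot⟩
  | k + 2, pos, hpos => by
    have ih (j : Fin 3) := exists_cut_inducedMatching_card_eq (k + 1) (pos ∘ Hcopy (k + 1) 0 j)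
      (hpos.comp (HcopyEmb (k + 1) 0 j).injective)
    choose τ M hM hcard hroot using ih
    have hsplit (j : Fin 3) : ∃ a b, pos (Hcopy (k + 1) 0 j a) < τ j ∧
        τ j ≤ pos (Hcopy (k + 1) 0 j b) := by
      obtain ⟨e, he⟩ := Finset.card_pos.mp (by rw [hcard j]; exact k.succ_pos)
      induction e using Sym2.ind with
      | h a b =>
        obtain ⟨-, hab | hba⟩ := (hM j).adj he
        exacts [⟨a, b, hab⟩, ⟨b, a, hba⟩]
    obtain ⟨j, x, y, hxy, hx, hy, hxc, hyc⟩ := exists_cross_edge_avoiding_copy pos 0 τ hsplit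
    obtain ⟨M', hM', hcard', hroot'⟩ :=
      exists_inducedMatching_insert_of_copy (hM j) (hroot j) hxy hx hy hxc hyc
    exact ⟨τ j, M', hM', by rw [hcard', hcard j], hroot'⟩

theorem le_mw_Hgraph (k : ℕ) (σ : HV k ≃ Fin (Fintype.card (HV k))) : k ≤ mw (Hgraph k) σ := by
  obtain ⟨τ, M, hM, hcard, -⟩ :=
    exists_cut_inducedMatching_card_eq k (σ ·) (Fin.val_injective.comp σ.injective)
  exact hcard.symm.le.trans hM.card_le_mw

end LowerBound

section UpperBound

variable {k c : ℕ} {p : HV k → ℕ}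

def blockStart (c : ℕ) (m j : Fin 3) : ℕ := m * (3 * c + 2) + j * c

lemma blockStart_bounds (c : ℕ) (m j : Fin 3) :
    m * (3 * c + 2) ≤ blockStart c m j ∧ blockStart c m j + c ≤ m * (3 * c + 2) + 3 * c := by
  fin_cases j <;> simp [blockStart] <;> omega

/-- The layout of `H (k + 1)` obtained from a layout `p` of `H k` with `c` positions: the three
copies below `v₀`, then `v₀, u`, the copies below `v₁`, then `v₁, v₂`, the copies below `v₂`. -/
def stepLayout (c : ℕ) (p : HV k → ℕ) : HV (k + 1) → ℕ := fun x => match x with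
  | Sum.inl _ => 3 * c + 1
  | Sum.inr (m, Sum.inl _) => ![3 * c, 6 * c + 2, 6 * c + 3] m
  | Sum.inr (m, Sum.inr (j, a)) => blockStart c m j + p a

@[simp] lemma stepLayout_root : stepLayout c p (Hroot (k + 1)) = 3 * c + 1 := rfl

@[simp] lemma stepLayout_child (m : Fin 3) :
    stepLayout c p (Hchild k m) = ![3 * c, 6 * c + 2, 6 * c + 3] m := rfl

@[simp] lemma stepLayout_copy (m j : Fin 3) (a : HV k) :
    stepLayout c p (Hcopy k m j a) = blockStart c m j + p a := rfl

lemma stepLayout_comp_Hcopy (m j : Fin 3) :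
    stepLayout c p ∘ Hcopy k m j = fun a => blockStart c m j + p a := rfl

lemma blockStart_unique {m j m' j' : Fin 3} {t : ℕ}
    (h : blockStart c m j ≤ t ∧ t < blockStart c m j + c)
    (h' : blockStart c m' j' ≤ t ∧ t < blockStart c m' j' + c) : m = m' ∧ j = j' := by
  fin_cases m <;> fin_cases j <;> fin_cases m' <;> fin_cases j' <;>
    simp [blockStart] at h h' ⊢ <;> omega

lemma stepLayout_lt (hp : ∀ a, p a < c) (x : HV (k + 1)) : stepLayout c p x < 9 * c + 4 := by
  rcases HV_succ_cases x with rfl | ⟨m, rfl⟩ | ⟨m, j, a, rfl⟩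
  · simp; omega
  · fin_cases m <;> simp <;> omega
  · have := hp a
    fin_cases m <;> fin_cases j <;> simp [blockStart] <;> omega

lemma stepLayout_injective (hp : ∀ a, p a < c) (hinj : Function.Injective p) :
    Function.Injective (stepLayout c p) := by
  intro x y h
  rcases HV_succ_cases x with rfl | ⟨m, rfl⟩ | ⟨m, j, a, rfl⟩ <;>
    rcases HV_succ_cases y with rfl | ⟨m', rfl⟩ | ⟨m', j', b, rfl⟩
  · rfl
  · fin_cases m' <;> simp at h <;> omega
  · have := hp b
    fin_cases m' <;> fin_cases j' <;> simp [blockStart] at h <;> omega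
  · fin_cases m <;> simp at h <;> omega
  · fin_cases m <;> fin_cases m' <;> simp at h ⊢ <;> omega
  · have := hp b
    fin_cases m <;> fin_cases m' <;> fin_cases j' <;> simp [blockStart] at h <;> omega
  · have := hp a
    fin_cases m <;> fin_cases j <;> simp [blockStart] at h <;> omega
  · have := hp a
    fin_cases m <;> fin_cases j <;> fin_cases m' <;> simp [blockStart] at h <;> omega
  · simp only [stepLayout_copy] at h
    have := hp a; have := hp b
    obtain ⟨rfl, rfl⟩ := blockStart_unique (c := c) (m := m) (j := j) (m' := m') (j' := j')
      (t := blockStart c m j + p a)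
      ⟨by omega, by omega⟩ ⟨by omega, by omega⟩
    rw [hinj (Nat.add_left_cancel h)]

lemma Hgraph_succ_edge_cases {x y : HV (k + 1)} (h : (Hgraph (k + 1)).Adj x y) :
    (∃ m, s(x, y) = s(Hroot (k + 1), Hchild k m)) ∨
      (∃ m j, s(x, y) = s(Hchild k m, Hcopy k m j (Hroot k))) ∨
      ∃ m j a b, s(x, y) = s(Hcopy k m j a, Hcopy k m j b) := by
  rcases HV_succ_cases x with rfl | ⟨m, rfl⟩ | ⟨m, j, a, rfl⟩ <;>
    rcases HV_succ_cases y with rfl | ⟨m', rfl⟩ | ⟨m', j', b, rfl⟩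
  · exact absurd h (SimpleGraph.irrefl _)
  · exact .inl ⟨m', rfl⟩
  · exact absurd h Hgraph_not_adj_root_copy
  · exact .inl ⟨m, Sym2.eq_swap⟩
  · exact absurd h Hgraph_not_adj_child_child
  · obtain ⟨rfl, rfl⟩ := Hgraph_adj_child_copy.mp h
    exact .inr (.inl ⟨m, j', rfl⟩)
  · exact absurd h Hgraph_not_adj_copy_root
  · obtain ⟨rfl, rfl⟩ := Hgraph_adj_copy_child.mp h
    exact .inr (.inl ⟨m', j, Sym2.eq_swap⟩)
  · obtain ⟨rfl, rfl, -⟩ := Hgraph_adj_copy_copy.mp h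
    exact .inr (.inr ⟨m, j, a, b, rfl⟩)

lemma cross_root_child_of_cross_child_copy (hp : p (Hroot k) < c) {i : ℕ} {m m' j : Fin 3}
    (h : (crossGraph (Hgraph (k + 1)) (stepLayout c p) i).Adj (Hroot (k + 1)) (Hchild k m))
    (h' : (crossGraph (Hgraph (k + 1)) (stepLayout c p) i).Adj (Hchild k m')
      (Hcopy k m' j (Hroot k))) :
    (crossGraph (Hgraph (k + 1)) (stepLayout c p) i).Adj (Hroot (k + 1)) (Hchild k m') := by
  obtain ⟨-, h⟩ := h
  obtain ⟨-, h'⟩ := h'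
  refine ⟨by simp, ?_⟩
  have := blockStart_bounds c m' j
  simp only [stepLayout_root, stepLayout_child, stepLayout_copy] at h h' ⊢
  fin_cases m <;> fin_cases m' <;> simp at h h' this ⊢ <;> omega

lemma eq_of_cross_child_copy (hp : p (Hroot k) < c) {i : ℕ} {m m' j j' : Fin 3}
    (h : (crossGraph (Hgraph (k + 1)) (stepLayout c p) i).Adj (Hchild k m)
      (Hcopy k m j (Hroot k)))
    (h' : (crossGraph (Hgraph (k + 1)) (stepLayout c p) i).Adj (Hchild k m')
      (Hcopy k m' j' (Hroot k))) : m = m' := by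
  obtain ⟨-, h⟩ := h
  obtain ⟨-, h'⟩ := h'
  have := blockStart_bounds c m j
  have := blockStart_bounds c m' j'
  simp only [stepLayout_child, stepLayout_copy] at h h'
  fin_cases m <;> fin_cases m' <;> simp at * <;> omega

lemma mem_block_of_cross_copy (hp : ∀ a, p a < c) {i : ℕ} {m j : Fin 3} {a b : HV k}
    (h : (crossGraph (Hgraph (k + 1)) (stepLayout c p) i).Adj (Hcopy k m j a) (Hcopy k m j b)) :
    blockStart c m j ≤ i ∧ i < blockStart c m j + c := by
  obtain ⟨-, h⟩ := h
  have := hp a; have := hp b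
  simp only [stepLayout_copy] at h
  omega

def IsCopyEdge (e : Sym2 (HV (k + 1))) : Prop :=
  ∃ m j a b, e = s(Hcopy k m j a, Hcopy k m j b)

variable {i : ℕ} {M : Finset (Sym2 (HV (k + 1)))}

lemma card_filter_isCopyEdge_le (hp : ∀ a, p a < c)
    (ih : ∀ i N, IsInducedMatching (crossGraph (Hgraph k) p i) N → N.card ≤ k)
    (hM : IsInducedMatching (crossGraph (Hgraph (k + 1)) (stepLayout c p) i) M) :
    (M.filter IsCopyEdge).card ≤ k := by
  obtain ⟨m, j, hsub⟩ : ∃ m j,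
      M.filter IsCopyEdge ⊆ Finset.univ.map (HcopyEmb k m j).toEmbedding.sym2Map := by
    by_cases h : ∃ e ∈ M, IsCopyEdge e
    · obtain ⟨_, he0, m, j, a0, b0, rfl⟩ := h
      refine ⟨m, j, fun e he => ?_⟩
      obtain ⟨he, m', j', a, b, rfl⟩ := Finset.mem_filter.mp he
      obtain ⟨rfl, rfl⟩ := blockStart_unique (mem_block_of_cross_copy hp (hM.adj he))
        (mem_block_of_cross_copy hp (hM.adj he0))
      exact Finset.mem_map.mpr ⟨s(a, b), Finset.mem_univ _, rfl⟩
    · exact ⟨0, 0, fun e he => absurd ⟨e, Finset.mem_filter.mp he⟩ h⟩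
  obtain ⟨N, -, hN⟩ := Finset.subset_map_iff.mp hsub
  have hN' : IsInducedMatching (crossGraph (Hgraph k) p (i - blockStart c m j)) N := by
    rw [← crossGraph_shift, ← stepLayout_comp_Hcopy]
    exact (isInducedMatching_map_iff ((HcopyEmb k m j).crossGraph _ i)).mp
      (hN ▸ hM.mono (Finset.filter_subset _ _))
  rw [hN, Finset.card_map]
  exact ih _ _ hN'

lemma card_filter_not_isCopyEdge_le_one (hp : ∀ a, p a < c)
    (hM : IsInducedMatching (crossGraph (Hgraph (k + 1)) (stepLayout c p) i) M) :
    (M.filter (¬ IsCopyEdge ·)).card ≤ 1 := by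
  have hshape : ∀ e ∈ M, ¬ IsCopyEdge e → (∃ m, e = s(Hroot (k + 1), Hchild k m)) ∨
      ∃ m j, e = s(Hchild k m, Hcopy k m j (Hroot k)) := by
    intro e he hne
    induction e using Sym2.ind with
    | h x y =>
      rcases Hgraph_succ_edge_cases (hM.adj he).1 with h | h | h
      exacts [.inl h, .inr h, absurd h hne]
  have hr := hp (Hroot k)
  rw [Finset.card_le_one]
  intro e he f hf
  rw [Finset.mem_filter] at he hf
  by_contra hef
  have hfar := hM.2 e he.1 f hf.1 hef
  rcases hshape e he.1 he.2 with ⟨m, rfl⟩ | ⟨m, j, rfl⟩ <;>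
    rcases hshape f hf.1 hf.2 with ⟨m', rfl⟩ | ⟨m', j', rfl⟩
  · exact (hfar _ (Sym2.mem_mk_left _ _) _ (Sym2.mem_mk_left _ _)).1 rfl
  · exact (hfar _ (Sym2.mem_mk_left _ _) _ (Sym2.mem_mk_left _ _)).2
      (cross_root_child_of_cross_child_copy hr (hM.adj he.1) (hM.adj hf.1))
  · exact (hfar _ (Sym2.mem_mk_left _ _) _ (Sym2.mem_mk_left _ _)).2
      (cross_root_child_of_cross_child_copy hr (hM.adj hf.1) (hM.adj he.1)).symm
  · obtain rfl := eq_of_cross_child_copy hr (hM.adj he.1) (hM.adj hf.1)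
    exact (hfar _ (Sym2.mem_mk_left _ _) _ (Sym2.mem_mk_left _ _)).1 rfl

lemma card_le_of_stepLayout (hp : ∀ a, p a < c)
    (ih : ∀ i N, IsInducedMatching (crossGraph (Hgraph k) p i) N → N.card ≤ k)
    (hM : IsInducedMatching (crossGraph (Hgraph (k + 1)) (stepLayout c p) i) M) :
    M.card ≤ k + 1 := by
  rw [← Finset.card_filter_add_card_filter_not IsCopyEdge]
  exact add_le_add (card_filter_isCopyEdge_le hp ih hM) (card_filter_not_isCopyEdge_le_one hp hM)

end UpperBound

lemma card_HV_succ (k : ℕ) : Fintype.card (HV (k + 1)) = 9 * Fintype.card (HV k) + 4 := by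
  change Fintype.card (Unit ⊕ (Fin 3 × (Unit ⊕ (Fin 3 × HV k)))) = _
  simp only [Fintype.card_sum, Fintype.card_prod, Fintype.card_unit, Fintype.card_fin]
  ring

theorem exists_layout_Hgraph : ∀ k : ℕ, ∃ σ : HV k ≃ Fin (Fintype.card (HV k)),
    ∀ i M, IsInducedMatching (crossGraph (Hgraph k) (σ ·) i) M → M.card ≤ k
  | 0 => ⟨Fintype.equivFin _, fun i M hM => by
      refine (Finset.card_eq_zero.mpr (Finset.eq_empty_of_forall_notMem fun e he => ?_)).le
      induction e using Sym2.ind with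
      | h x y =>
        obtain ⟨⟩ := x; obtain ⟨⟩ := y
        exact (hM.adj he).ne rfl⟩
  | k + 1 => by
    obtain ⟨σ, hσ⟩ := exists_layout_Hgraph k
    have hp (a : HV k) : (σ a : ℕ) < Fintype.card (HV k) := (σ a).isLt
    obtain ⟨τ, hτ⟩ := exists_equiv_fin_of_injective
      (stepLayout_injective hp (Fin.val_injective.comp σ.injective))
      (fun x => card_HV_succ k ▸ stepLayout_lt hp x)
    refine ⟨τ, fun i M hM => card_le_of_stepLayout (i := i) hp hσ ?_⟩
    rwa [show (τ · : HV (k + 1) → ℕ) = stepLayout _ (σ ·) from funext hτ] at hM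

/-- For every `k ≥ 0`, the tree `H k` has linear MIM-width exactly `k`. -/
theorem lmw_Hgraph (k : ℕ) : lmw (Hgraph k) = k := by
  obtain ⟨σ, hσ⟩ := exists_layout_Hgraph k
  exact le_antisymm ((lmw_le σ).trans (mw_le hσ)) (le_lmw (le_mw_Hgraph k))

end LMW
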